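/- For every discrete random variable X, H_∞(X) ≤ Λ(X), with equality if and only if X is uniformly distributed, where H_∞(X) = −log max_x p_X(x) is the min-entropy. -/
import Mathlib

noncomputable def lamt (i : ℕ) : ℝ :=
  ((i : ℝ) + 1) * Real.logb 2 ((i : ℝ) + 1) - (i : ℝ) * Real.logb 2 (i : ℝ)

open Real Set

lemma lamt_eq (i : ℕ) :
    lamt i = (((i : ℝ) + 1) * Real.log ((i : ℝ) + 1) - (i : ℝ) * Real.log (i : ℝ)) / Real.log 2 := by
  unfold lamt Real.logb; ring

lemma log2_pos : (0:ℝ) < Real.log 2 := Real.log_pos (by norm_num)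

lemma lamt_zero : lamt 0 = 0 := by simp [lamt]

lemma lamt_strictMono : StrictMono lamt := by
  apply strictMono_nat_of_lt_succ
  intro i
  rw [lamt_eq, lamt_eq]
  rw [div_lt_div_iff_of_pos_right log2_pos]
  push_cast
  have h := Real.strictConvexOn_mul_log.2 (Set.mem_Ici.2 (by positivity : (0:ℝ) ≤ (i:ℝ)))
    (Set.mem_Ici.2 (by positivity : (0:ℝ) ≤ (i:ℝ)+2)) (by norm_num : (i:ℝ) ≠ (i:ℝ)+2)
    (by norm_num : (0:ℝ) < 1/2) (by norm_num : (0:ℝ) < 1/2) (by norm_num)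
  have he : (1/2 : ℝ) • (i:ℝ) + (1/2 : ℝ) • ((i:ℝ)+2) = (i:ℝ)+1 := by
    simp only [smul_eq_mul]; ring
  rw [he] at h
  simp only [smul_eq_mul] at h
  have h2 : ((i:ℝ)+1+1) = (i:ℝ)+2 := by ring
  rw [h2]
  linarith

lemma lamt_mono : Monotone lamt := lamt_strictMono.monotone

lemma lamt_nonneg (i : ℕ) : 0 ≤ lamt i := lamt_zero ▸ lamt_mono (Nat.zero_le i)

lemma lamt_one : lamt 1 = 2 := by
  have : Real.logb 2 2 = 1 := Real.logb_self_eq_one (by norm_num)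
  simp [lamt, this]
  norm_num [this]

lemma lamt_ge_one {i : ℕ} (hi : 1 ≤ i) : 1 ≤ lamt i := by
  have := lamt_mono hi
  rw [lamt_one] at this; linarith

lemma sum_lamt (m : ℕ) : ∑ i ∈ Finset.range m, lamt i = (m : ℝ) * Real.logb 2 (m : ℝ) := by
  induction m with
  | zero => simp
  | succ n ih =>
    rw [Finset.sum_range_succ, ih]
    unfold lamt
    push_cast
    ring

/-- chord inequality: on `[m-1, m]`, `x logb 2 x` lies below the chord. -/
lemma chord_le {m : ℕ} (hm : 1 ≤ m) {c : ℝ} (h1 : (m:ℝ) - 1 < c) (h2 : c ≤ m) :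
    c * Real.logb 2 c ≤ (m:ℝ) * Real.logb 2 (m:ℝ) + lamt (m-1) * (c - m) ∧
      (c * Real.logb 2 c = (m:ℝ) * Real.logb 2 (m:ℝ) + lamt (m-1) * (c - m) ↔ c = m) := by
  have hcast : ((m - 1 : ℕ) : ℝ) = (m:ℝ) - 1 := by
    push_cast [Nat.cast_sub hm]; ring
  have hlam : lamt (m-1) = ((m:ℝ) * Real.log (m:ℝ) - ((m:ℝ)-1) * Real.log ((m:ℝ)-1)) / Real.log 2 := by
    rw [lamt_eq, hcast]; norm_num
  rcases eq_or_lt_of_le h2 with rfl | hlt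
  · exact ⟨by simp, by simp⟩
  · have hm1 : (0:ℝ) ≤ (m:ℝ) - 1 := by
      have : (1:ℝ) ≤ (m:ℝ) := by exact_mod_cast hm
      linarith
    have ha : 0 < (m:ℝ) - c := by linarith
    have hb : 0 < c - ((m:ℝ) - 1) := by linarith
    have h := Real.strictConvexOn_mul_log.2 (Set.mem_Ici.2 hm1)
      (Set.mem_Ici.2 (by positivity : (0:ℝ) ≤ (m:ℝ))) (by norm_num)
      ha hb (by ring)
    have he : ((m:ℝ) - c) • ((m:ℝ) - 1) + (c - ((m:ℝ)-1)) • (m:ℝ) = c := by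
      simp only [smul_eq_mul]; ring
    rw [he] at h
    simp only [smul_eq_mul] at h
    have key : c * Real.log c < (m:ℝ) * Real.log (m:ℝ) +
        ((m:ℝ) * Real.log (m:ℝ) - ((m:ℝ)-1) * Real.log ((m:ℝ)-1)) * (c - m) := by
      nlinarith [h]
    have hq : c * Real.logb 2 c < (m:ℝ) * Real.logb 2 (m:ℝ) + lamt (m-1) * (c - m) := by
      rw [hlam]
      unfold Real.logb
      rw [show c * (Real.log c / Real.log 2) = (c * Real.log c) / Real.log 2 by ring,
        show (m:ℝ) * (Real.log (m:ℝ) / Real.log 2) +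
            ((m:ℝ) * Real.log (m:ℝ) - ((m:ℝ)-1) * Real.log ((m:ℝ)-1)) / Real.log 2 * (c - (m:ℝ))
          = ((m:ℝ) * Real.log (m:ℝ) +
            ((m:ℝ) * Real.log (m:ℝ) - ((m:ℝ)-1) * Real.log ((m:ℝ)-1)) * (c - (m:ℝ))) / Real.log 2 by ring,
        div_lt_div_iff_of_pos_right log2_pos]
      exact key
    exact ⟨hq.le, fun he' => absurd he' hq.ne, fun he' => absurd he' hlt.ne⟩

def IsPMF {X : Type*} (p : X → ℝ) : Prop := (∀ x, 0 ≤ p x) ∧ HasSum p 1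

def IsDescRearrange {X : Type*} (p : X → ℝ) (q : ℕ → ℝ) : Prop :=
  Antitone q ∧ ∀ t : ℝ, 0 < t → {x | t < p x}.ncard = {i | t < q i}.ncard

section plumb

variable {X : Type*} {p : X → ℝ} {q : ℕ → ℝ}

lemma fin_p (hp : Summable p) {t : ℝ} (ht : 0 < t) : {x | t < p x}.Finite := by
  have h : ∀ᶠ x in Filter.cofinite, p x < t := by
    have := hp.tendsto_cofinite_zero
    exact this.eventually_lt_const ht
  exact (Filter.eventually_cofinite.mp h).subset (fun x hx => by
    simp only [mem_setOf_eq] at hx ⊢; linarith)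

lemma p_eq_zero_of_le (hpmf : IsPMF p) (hz : ∀ x, ∀ t : ℝ, 0 < t → p x ≤ t) : False := by
  have hp0 : ∀ x, p x = 0 := by
    intro x
    refine le_antisymm ?_ (hpmf.1 x)
    by_contra hc
    push_neg at hc
    have := hz x (p x / 2) (by linarith)
    linarith
  have : HasSum p 0 := by
    convert hasSum_zero with x
    exact hp0 _
  exact one_ne_zero (hpmf.2.unique this)

lemma fin_q (hpmf : IsPMF p) (hq : IsDescRearrange p q) {t : ℝ} (ht : 0 < t) :
    {i | t < q i}.Finite := by
  by_contra hinf
  have hinf : {i | t < q i}.Infinite := hinf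
  have hall : ∀ i, t < q i := by
    intro i
    obtain ⟨j, hj, hij⟩ := hinf.exists_gt i
    exact lt_of_lt_of_le hj (hq.1 hij.le)
  refine p_eq_zero_of_le hpmf (fun x t' ht' => ?_)
  rcases le_or_gt t' t with h' | h'
  · have huniv : {i | t' < q i} = Set.univ := by
      ext i; simp only [mem_setOf_eq, mem_univ, iff_true]
      exact lt_of_le_of_lt h' (hall i)
    have hnc : {i | t' < q i}.ncard = 0 := by
      rw [huniv]
      exact Set.Infinite.ncard (Set.infinite_univ)
    have := hq.2 t' ht'
    rw [hnc] at this
    have hempty : {x | t' < p x} = ∅ :=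
      (Set.ncard_eq_zero (fin_p hpmf.2.summable ht')).mp this
    by_contra hc
    push_neg at hc
    have hx : x ∈ {x | t' < p x} := hc
    rw [hempty] at hx
    exact Set.notMem_empty x hx
  · -- t < t', and q i > t doesn't directly help; but p x ≤ t ≤ t'
    rcases le_or_gt (p x) t' with h | h
    · exact h
    · exfalso
      -- p x > t' > t; but then also at level t: fine — use smaller level t itself
      have huniv : {i | t < q i} = Set.univ := by
        ext i; simpa using hall i
      have hnc : {i | t < q i}.ncard = 0 := by
        rw [huniv]; exact Set.Infinite.ncard (Set.infinite_univ)
      have := hq.2 t ht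
      rw [hnc] at this
      have hempty : {x | t < p x} = ∅ :=
        (Set.ncard_eq_zero (fin_p hpmf.2.summable ht)).mp this
      have : x ∈ {x | t < p x} := by simp only [mem_setOf_eq]; linarith
      rw [hempty] at this
      exact Set.notMem_empty x this

lemma q_nonneg (hq : IsDescRearrange p q) (hsum : Summable (fun i => q i * lamt i)) :
    ∀ i, 0 ≤ q i := by
  intro N
  by_contra hc
  push_neg at hc
  have htend : Filter.Tendsto (fun i => q i * lamt i) Filter.cofinite (nhds 0) :=
    hsum.tendsto_cofinite_zero
  rw [Nat.cofinite_eq_atTop] at htend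
  have hev : ∀ᶠ i in Filter.atTop, q N < q i * lamt i :=
    htend.eventually_const_lt (by linarith)
  obtain ⟨i, hi, hiN⟩ := (hev.and (Filter.eventually_ge_atTop (max N 1))).exists
  have h1 : q i ≤ q N := hq.1 (le_trans (le_max_left _ _) hiN)
  have h2 : (1:ℝ) ≤ lamt i := lamt_ge_one (le_trans (le_max_right _ _) hiN)
  have : q i * lamt i ≤ q N := by
    calc q i * lamt i ≤ q N * lamt i := by
          apply mul_le_mul_of_nonneg_right h1 (by linarith [lamt_nonneg i])
      _ ≤ q N * 1 := by
          apply mul_le_mul_of_nonpos_left h2 (by linarith)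
      _ = q N := mul_one _
  linarith

end plumb

section plumb2

variable {X : Type*} {p : X → ℝ} {q : ℕ → ℝ}

lemma fiber_eq (hpmf : IsPMF p) (hq : IsDescRearrange p q) {v : ℝ} (hv : 0 < v) :
    {x | p x = v}.Finite ∧ {i | q i = v}.Finite ∧
      {x | p x = v}.ncard = {i | q i = v}.ncard := by
  have hv2 : 0 < v/2 := by linarith
  have hA : {x | v/2 < p x}.Finite := fin_p hpmf.2.summable hv2
  have hB : {i | v/2 < q i}.Finite := fin_q hpmf hq hv2
  have hW : ((p '' {x | v/2 < p x} ∪ q '' {i | v/2 < q i}) ∩ Set.Ioo (v/2) v).Finite :=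
    Set.Finite.inter_of_left ((hA.image p).union (hB.image q)) _
  set F : Finset ℝ := insert (v/2) hW.toFinset with hF
  have hne : F.Nonempty := ⟨v/2, Finset.mem_insert_self _ _⟩
  set t : ℝ := F.max' hne with htdef
  have ht_ge : v/2 ≤ t := Finset.le_max' _ _ (Finset.mem_insert_self _ _)
  have ht0 : 0 < t := lt_of_lt_of_le hv2 ht_ge
  have ht_lt : t < v := by
    rw [htdef, Finset.max'_lt_iff]
    intro y hy
    rcases Finset.mem_insert.mp hy with rfl | hy
    · linarith
    · exact ((Set.Finite.mem_toFinset hW).mp hy).2.2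
  have hgap_p : ∀ x, t < p x → ¬ p x < v := by
    intro x h1 h2
    have hx : p x ∈ (p '' {x | v/2 < p x} ∪ q '' {i | v/2 < q i}) ∩ Set.Ioo (v/2) v := by
      constructor
      · exact Or.inl ⟨x, by simp only [mem_setOf_eq]; linarith, rfl⟩
      · exact ⟨by linarith, h2⟩
    have : p x ≤ t := Finset.le_max' _ _ (Finset.mem_insert_of_mem ((Set.Finite.mem_toFinset hW).mpr hx))
    linarith
  have hgap_q : ∀ i, t < q i → ¬ q i < v := by
    intro i h1 h2
    have hx : q i ∈ (p '' {x | v/2 < p x} ∪ q '' {i | v/2 < q i}) ∩ Set.Ioo (v/2) v := by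
      constructor
      · exact Or.inr ⟨i, by simp only [mem_setOf_eq]; linarith, rfl⟩
      · exact ⟨by linarith, h2⟩
    have : q i ≤ t := Finset.le_max' _ _ (Finset.mem_insert_of_mem ((Set.Finite.mem_toFinset hW).mpr hx))
    linarith
  have hsplit_p : {x | t < p x} = {x | p x = v} ∪ {x | v < p x} := by
    ext x
    simp only [mem_setOf_eq, mem_union]
    constructor
    · intro h
      rcases lt_trichotomy (p x) v with h' | h' | h'
      · exact absurd h' (hgap_p x h)
      · exact Or.inl h'
      · exact Or.inr h'
    · rintro (h | h) <;> [rw [h]; skip] <;> linarith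
  have hsplit_q : {i | t < q i} = {i | q i = v} ∪ {i | v < q i} := by
    ext i
    simp only [mem_setOf_eq, mem_union]
    constructor
    · intro h
      rcases lt_trichotomy (q i) v with h' | h' | h'
      · exact absurd h' (hgap_q i h)
      · exact Or.inl h'
      · exact Or.inr h'
    · rintro (h | h) <;> [rw [h]; skip] <;> linarith
  have hfin_pv : {x | p x = v}.Finite := hA.subset (fun x hx => by
    simp only [mem_setOf_eq] at hx ⊢; linarith [hx])
  have hfin_qv : {i | q i = v}.Finite := hB.subset (fun i hi => by
    simp only [mem_setOf_eq] at hi ⊢; linarith [hi])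
  have hfin_pgt : {x | v < p x}.Finite := fin_p hpmf.2.summable hv
  have hfin_qgt : {i | v < q i}.Finite := fin_q hpmf hq hv
  have hd_p : Disjoint {x | p x = v} {x | v < p x} := by
    rw [Set.disjoint_left]
    intro x h1 h2
    simp only [mem_setOf_eq] at h1 h2
    linarith [h1, h2]
  have hd_q : Disjoint {i | q i = v} {i | v < q i} := by
    rw [Set.disjoint_left]
    intro i h1 h2
    simp only [mem_setOf_eq] at h1 h2
    linarith [h1, h2]
  have e1 : {x | t < p x}.ncard = {x | p x = v}.ncard + {x | v < p x}.ncard := by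
    rw [hsplit_p]; exact Set.ncard_union_eq hd_p hfin_pv hfin_pgt
  have e2 : {i | t < q i}.ncard = {i | q i = v}.ncard + {i | v < q i}.ncard := by
    rw [hsplit_q]; exact Set.ncard_union_eq hd_q hfin_qv hfin_qgt
  have e3 := hq.2 t ht0
  have e4 := hq.2 v hv
  refine ⟨hfin_pv, hfin_qv, ?_⟩
  omega

end plumb2

section plumb3

variable {X : Type*} {p : X → ℝ} {q : ℕ → ℝ}

lemma q_hasSum_one (hpmf : IsPMF p) (hq : IsDescRearrange p q) (hqnn : ∀ i, 0 ≤ q i) :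
    HasSum q 1 := by
  classical
  have hE : ∀ v : ℝ, 0 < v → Nonempty ({i : ℕ // q i = v} ≃ {x : X // p x = v}) := by
    intro v hv
    obtain ⟨hfp, hfq, hcard⟩ := fiber_eq hpmf hq hv
    have h1 : Finite {i : ℕ // q i = v} := hfq.to_subtype
    have h2 : Finite {x : X // p x = v} := hfp.to_subtype
    apply Finite.card_eq.mp
    have c1 : Nat.card {i : ℕ // q i = v} = {i : ℕ | q i = v}.ncard :=
      Nat.card_coe_set_eq _
    have c2 : Nat.card {x : X // p x = v} = {x : X | p x = v}.ncard :=
      Nat.card_coe_set_eq _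
    rw [c1, c2, hcard]
  let E : ∀ v : ℝ, 0 < v → ({i : ℕ // q i = v} ≃ {x : X // p x = v}) :=
    fun v hv => (hE v hv).some
  have key : ∀ (v w : ℝ) (hv : 0 < v) (hw : 0 < w), v = w →
      ∀ (a : {i : ℕ // q i = v}) (b : {i : ℕ // q i = w}),
      (E v hv a : X) = (E w hw b : X) → a.1 = b.1 := by
    rintro v w hv hw rfl a b h
    have : a = b := (E v hv).injective (Subtype.ext h)
    exact congrArg Subtype.val this
  have key2 : ∀ (v w : ℝ) (hv : 0 < v) (hw : 0 < w), v = w →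
      ∀ (a : {i : ℕ // q i = v}) (b : {i : ℕ // q i = w}),
      a.1 = b.1 → (E v hv a : X) = (E w hw b : X) := by
    rintro v w hv hw rfl a b h
    have : a = b := Subtype.ext h
    rw [this]
  have hvpos : ∀ j : Function.support q, 0 < q j.1 := by
    intro j
    exact lt_of_le_of_ne (hqnn j.1) (Ne.symm j.2)
  let ι : Function.support q → X := fun j => (E (q j.1) (hvpos j) ⟨j.1, rfl⟩ : X)
  have hval : ∀ j : Function.support q, p (ι j) = q j.1 :=
    fun j => (E (q j.1) (hvpos j) ⟨j.1, rfl⟩).2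
  have hinj : Function.Injective ι := by
    intro j1 j2 h
    have e : q j1.1 = q j2.1 := by
      rw [← hval j1, ← hval j2, h]
    have := key (q j1.1) (q j2.1) (hvpos j1) (hvpos j2) e ⟨j1.1, rfl⟩ ⟨j2.1, rfl⟩ h
    exact Subtype.ext this
  have hsupp : Function.support p ⊆ Set.range ι := by
    intro x hx
    have hv : 0 < p x := lt_of_le_of_ne (hpmf.1 x) (Ne.symm hx)
    set b : {i : ℕ // q i = p x} := (E (p x) hv).symm ⟨x, rfl⟩ with hb
    have hbj : q b.1 = p x := b.2
    have hbne : b.1 ∈ Function.support q := by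
      simp only [Function.mem_support]
      rw [hbj]; exact ne_of_gt hv
    refine ⟨⟨b.1, hbne⟩, ?_⟩
    show (E (q b.1) (hvpos ⟨b.1, hbne⟩) ⟨b.1, rfl⟩ : X) = x
    have step : (E (q b.1) (hvpos ⟨b.1, hbne⟩) ⟨b.1, rfl⟩ : X) = (E (p x) hv b : X) :=
      key2 (q b.1) (p x) (hvpos ⟨b.1, hbne⟩) hv hbj ⟨b.1, rfl⟩ b rfl
    rw [step, hb]
    have : (E (p x) hv) ((E (p x) hv).symm ⟨x, rfl⟩) = ⟨x, rfl⟩ :=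
      (E (p x) hv).apply_symm_apply _
    rw [this]
  exact (hasSum_iff_hasSum_of_ne_zero_bij ι hinj hsupp hval).mp hpmf.2

end plumb3

section plumb4

variable {X : Type*} {p : X → ℝ} {q : ℕ → ℝ}

lemma p_bddAbove (hpmf : IsPMF p) : BddAbove (Set.range p) := by
  refine ⟨1, ?_⟩
  rintro y ⟨x, rfl⟩
  exact le_hasSum hpmf.2 x (fun j _ => hpmf.1 j)

lemma q_zero_pos (hpmf : IsPMF p) (hq : IsDescRearrange p q) : 0 < q 0 := by
  -- some x has p x > 0
  by_contra hc
  push_neg at hc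
  refine p_eq_zero_of_le hpmf (fun x t ht => ?_)
  have hempty : {i | t/2 < q i} = ∅ := by
    ext i
    simp only [mem_setOf_eq, mem_empty_iff_false, iff_false, not_lt]
    exact le_trans (hq.1 (Nat.zero_le i)) (by linarith)
  have h0 := hq.2 (t/2) (by linarith)
  rw [hempty] at h0
  simp only [Set.ncard_empty] at h0
  have hpe : {x | t/2 < p x} = ∅ :=
    (Set.ncard_eq_zero (fin_p hpmf.2.summable (by linarith))).mp h0
  have : x ∉ {x | t/2 < p x} := by rw [hpe]; exact Set.notMem_empty x
  simp only [mem_setOf_eq, not_lt] at this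
  linarith

lemma p_le_q_zero (hpmf : IsPMF p) (hq : IsDescRearrange p q) (x : X) : p x ≤ q 0 := by
  by_contra hc
  push_neg at hc
  have h0 : 0 < q 0 := q_zero_pos hpmf hq
  have hempty : {i | q 0 < q i} = ∅ := by
    ext i
    simp only [mem_setOf_eq, mem_empty_iff_false, iff_false, not_lt]
    exact hq.1 (Nat.zero_le i)
  have h1 := hq.2 (q 0) h0
  rw [hempty] at h1
  simp only [Set.ncard_empty] at h1
  have hpe : {x | q 0 < p x} = ∅ :=
    (Set.ncard_eq_zero (fin_p hpmf.2.summable h0)).mp h1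
  have : x ∈ {x | q 0 < p x} := hc
  rw [hpe] at this
  exact Set.notMem_empty x this

lemma q_zero_eq_iSup [Nonempty X] (hpmf : IsPMF p) (hq : IsDescRearrange p q) :
    q 0 = ⨆ x, p x := by
  refine le_antisymm ?_ (ciSup_le (p_le_q_zero hpmf hq))
  by_contra hc
  push_neg at hc
  -- hc : ⨆ x, p x < q 0
  set s := ⨆ x, p x with hs
  have hs0 : 0 ≤ s := by
    obtain ⟨x⟩ := ‹Nonempty X›
    exact le_trans (hpmf.1 x) (le_ciSup (p_bddAbove hpmf) x)
  set t := (s + q 0)/2 with htdef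
  have ht0 : 0 < t := by
    have := q_zero_pos hpmf hq
    rw [htdef]; linarith
  have hmem : 0 ∈ {i | t < q i} := by
    simp only [mem_setOf_eq, htdef]; linarith
  have hfin : {i | t < q i}.Finite := fin_q hpmf hq ht0
  have hpos : 0 < {i | t < q i}.ncard := by
    rw [Set.ncard_pos hfin]
    exact ⟨0, hmem⟩
  have heq := hq.2 t ht0
  rw [← heq] at hpos
  rw [Set.ncard_pos (fin_p hpmf.2.summable ht0)] at hpos
  obtain ⟨x, hx⟩ := hpos
  have h1 : p x ≤ s := le_ciSup (p_bddAbove hpmf) x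
  have h2 : t < p x := hx
  rw [htdef] at h2
  linarith

end plumb4

lemma lower_set_eq_Iio {A : Set ℕ} (hlow : ∀ ⦃i j : ℕ⦄, i ≤ j → j ∈ A → i ∈ A)
    (hfin : A.Finite) : A = Set.Iio A.ncard := by
  ext j
  simp only [Set.mem_Iio]
  constructor
  · intro hj
    have hsub : Set.Iic j ⊆ A := fun k hk => hlow hk hj
    have h1 : (Set.Iic j).ncard ≤ A.ncard := Set.ncard_le_ncard hsub hfin
    have h2 : (Set.Iic j).ncard = j + 1 := by
      rw [show Set.Iic j = ↑(Finset.Iic j) by simp, Set.ncard_coe_finset, Nat.card_Iic]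
    omega
  · intro hj
    by_contra hc
    have hsub : A ⊆ Set.Iio j := by
      intro k hk
      simp only [Set.mem_Iio]
      by_contra hk'
      push_neg at hk'
      exact hc (hlow hk' hk)
    have h1 : A.ncard ≤ (Set.Iio j).ncard := Set.ncard_le_ncard hsub (Set.finite_Iio j)
    have h2 : (Set.Iio j).ncard = j := by
      rw [show Set.Iio j = ↑(Finset.range j) by simp, Set.ncard_coe_finset, Finset.card_range]
    omega

/-- `p` is the pmf of a uniform distribution on a finite nonempty set. -/
def IsUniform {X : Type*} (p : X → ℝ) : Prop :=
  ∃ S : Finset X, S.Nonempty ∧ (∀ x ∈ S, p x = ((S.card : ℝ))⁻¹) ∧ ∀ x ∉ S, p x = 0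

section main

variable {X : Type*} {p : X → ℝ} {q : ℕ → ℝ}

/-- backward direction: uniform implies q is the uniform pattern -/
lemma q_of_uniform (hpmf : IsPMF p) (hq : IsDescRearrange p q)
    (hqnn : ∀ i, 0 ≤ q i)
    {S : Finset X} (hSne : S.Nonempty) (hmem : ∀ x ∈ S, p x = ((S.card : ℝ))⁻¹)
    (hout : ∀ x ∉ S, p x = 0) :
    ∀ i, q i = if i < S.card then ((S.card : ℝ))⁻¹ else 0 := by
  set n := S.card with hn
  have hn1 : 1 ≤ n := Finset.card_pos.mpr hSne
  have hninv : (0:ℝ) < (n:ℝ)⁻¹ := by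
    have : (0:ℝ) < (n:ℝ) := by exact_mod_cast hn1
    positivity
  have hlevel : ∀ t : ℝ, 0 < t → t < (n:ℝ)⁻¹ → {x | t < p x} = (↑S : Set X) := by
    intro t ht htn
    ext x
    simp only [mem_setOf_eq, Finset.coe_sort_coe, Finset.mem_coe]
    constructor
    · intro h
      by_contra hx
      rw [hout x hx] at h; linarith
    · intro hx
      rw [hmem x hx]; exact htn
  have hlevel2 : {x | (n:ℝ)⁻¹ < p x} = ∅ := by
    ext x
    simp only [mem_setOf_eq, mem_empty_iff_false, iff_false, not_lt]
    by_cases hx : x ∈ S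
    · rw [hmem x hx]
    · rw [hout x hx]; positivity
  -- q i > t iff i < n, for 0 < t < n⁻¹
  have hqiff : ∀ t : ℝ, 0 < t → t < (n:ℝ)⁻¹ → ∀ i, (t < q i ↔ i < n) := by
    intro t ht htn i
    have hfin : {i | t < q i}.Finite := fin_q hpmf hq ht
    have hlow : ∀ ⦃i j : ℕ⦄, i ≤ j → j ∈ {i | t < q i} → i ∈ {i | t < q i} := by
      intro i j hij hj
      exact lt_of_lt_of_le hj (hq.1 hij)
    have hncard : {i | t < q i}.ncard = n := by
      rw [← hq.2 t ht, hlevel t ht htn, Set.ncard_coe_finset]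
    have := lower_set_eq_Iio hlow hfin
    rw [hncard] at this
    constructor
    · intro h
      have : i ∈ Set.Iio n := this ▸ (show i ∈ {i | t < q i} from h)
      exact this
    · intro h
      have : i ∈ {i | t < q i} := this ▸ (Set.mem_Iio.mpr h)
      exact this
  have hqub : ∀ i, q i ≤ (n:ℝ)⁻¹ := by
    intro i
    have h1 := hq.2 ((n:ℝ)⁻¹) hninv
    rw [hlevel2] at h1
    simp only [Set.ncard_empty] at h1
    have hfin : {i | (n:ℝ)⁻¹ < q i}.Finite := fin_q hpmf hq hninv
    have hempty : {i | (n:ℝ)⁻¹ < q i} = ∅ := (Set.ncard_eq_zero hfin).mp h1.symm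
    by_contra hc
    push_neg at hc
    have : i ∈ {i | (n:ℝ)⁻¹ < q i} := hc
    rw [hempty] at this
    exact Set.notMem_empty i this
  intro i
  by_cases hi : i < n
  · simp only [if_pos hi]
    refine le_antisymm (hqub i) ?_
    by_contra hc
    push_neg at hc
    set t := max (q i) ((n:ℝ)⁻¹/2) with htdef
    have ht0 : 0 < t := lt_of_lt_of_le (by linarith) (le_max_right _ _)
    have htn : t < (n:ℝ)⁻¹ := max_lt hc (by linarith)
    have := (hqiff t ht0 htn i).mpr hi
    have h2 : q i ≤ t := le_max_left _ _
    linarith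
  · simp only [if_neg hi]
    refine le_antisymm ?_ (hqnn i)
    by_contra hc
    push_neg at hc
    set t := min (q i) ((n:ℝ)⁻¹) / 2 with htdef
    have ht0 : 0 < t := by
      rw [htdef]
      have : 0 < min (q i) ((n:ℝ)⁻¹) := lt_min hc hninv
      linarith
    have htn : t < (n:ℝ)⁻¹ := by
      rw [htdef]
      have : min (q i) ((n:ℝ)⁻¹) ≤ (n:ℝ)⁻¹ := min_le_right _ _
      linarith
    have hnotlt := (hqiff t ht0 htn i).not.mpr (by omega)
    push_neg at hnotlt
    have : t < q i := by
      rw [htdef]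
      have : min (q i) ((n:ℝ)⁻¹) ≤ q i := min_le_left _ _
      linarith [lt_min hc hninv]
    linarith

end main

/-- `H_∞(X) ≤ Λ(X)`, with equality iff `X` is uniformly distributed. -/
theorem stmt2 {X : Type*} [Nonempty X] (p : X → ℝ) (q : ℕ → ℝ)
    (hpmf : IsPMF p) (hq : IsDescRearrange p q)
    (hsum : Summable (fun i => q i * lamt i)) :
    -(Real.logb 2 (⨆ x, p x)) ≤ ∑' i : ℕ, q i * lamt i ∧
      (-(Real.logb 2 (⨆ x, p x)) = ∑' i : ℕ, q i * lamt i ↔ IsUniform p) := by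
  classical
  have hqnn : ∀ i, 0 ≤ q i := q_nonneg hq hsum
  have hq1 : HasSum q 1 := q_hasSum_one hpmf hq hqnn
  have hqs : Summable q := hq1.summable
  have htq : ∑' i, q i = 1 := hq1.tsum_eq
  have ha0 : 0 < q 0 := q_zero_pos hpmf hq
  have hsup : q 0 = ⨆ x, p x := q_zero_eq_iSup hpmf hq
  set a := q 0 with hadef
  have ha1 : a ≤ 1 := by
    have := Summable.le_tsum hqs 0 (fun j _ => hqnn j)
    rw [htq] at this; exact this
  have hqle : ∀ i, q i ≤ a := fun i => hq.1 (Nat.zero_le i)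
  clear_value a
  obtain ⟨c, hcdef⟩ : ∃ c : ℝ, c = a⁻¹ := ⟨_, rfl⟩
  have hac : a * c = 1 := by rw [hcdef]; exact mul_inv_cancel₀ ha0.ne'
  have hc0 : 0 < c := by rw [hcdef]; positivity
  have hc1 : 1 ≤ c := by nlinarith
  obtain ⟨m, hm1, hcm, hcm1⟩ : ∃ m : ℕ, 1 ≤ m ∧ c ≤ (m:ℝ) ∧ (m:ℝ) - 1 < c := by
    refine ⟨⌈c⌉₊, Nat.ceil_pos.mpr (by linarith), Nat.le_ceil c, ?_⟩
    have := Nat.ceil_lt_add_one (show (0:ℝ) ≤ c by linarith)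
    linarith
  have hm0R : (0:ℝ) < (m:ℝ) := by exact_mod_cast hm1
  obtain ⟨θ, hθdef⟩ : ∃ θ : ℝ, θ = lamt (m-1) := ⟨_, rfl⟩
  obtain ⟨z, hzpos, hzneg⟩ : ∃ z : ℕ → ℝ, (∀ i, i < m → z i = θ - lamt i) ∧
      (∀ i, ¬ i < m → z i = 0) := by
    refine ⟨fun i => if i < m then θ - lamt i else 0, fun i hi => by simp [hi],
      fun i hi => by simp [hi]⟩
  have hθge : ∀ i, i < m → lamt i ≤ θ := by
    intro i hi
    rw [hθdef]
    exact lamt_mono (by omega)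
  have hθlt : ∀ i, i < m - 1 → lamt i < θ := by
    intro i hi
    rw [hθdef]
    exact lamt_strictMono (by omega)
  have hθle : ∀ i, m ≤ i → θ ≤ lamt i := by
    intro i hi
    rw [hθdef]
    exact lamt_mono (by omega)
  have hθgt : ∀ i, m ≤ i → θ < lamt i := by
    intro i hi
    rw [hθdef]
    exact lamt_strictMono (by omega)
  have hznn : ∀ i, 0 ≤ z i := by
    intro i
    by_cases hi : i < m
    · rw [hzpos i hi]; linarith [hθge i hi]
    · rw [hzneg i hi]
  have hzsum : Summable z := by
    apply summable_of_ne_finset_zero (s := Finset.range m)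
    intro i hi
    simp only [Finset.mem_range] at hi
    exact hzneg i hi
  have hztsum : ∑' i, z i = (m:ℝ) * θ - (m:ℝ) * Real.logb 2 (m:ℝ) := by
    rw [tsum_eq_sum (s := Finset.range m) (fun i hi => hzneg i (by simpa [Finset.mem_range] using hi))]
    have : ∀ i ∈ Finset.range m, z i = θ - lamt i := by
      intro i hi
      exact hzpos i (by simpa [Finset.mem_range] using hi)
    rw [Finset.sum_congr rfl this, Finset.sum_sub_distrib, Finset.sum_const, Finset.card_range,
      sum_lamt, nsmul_eq_mul]
  obtain ⟨T, hTdef⟩ : ∃ T : ℕ → ℝ, ∀ i, T i = q i * lamt i - θ * q i + a * z i :=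
    ⟨_, fun i => rfl⟩
  have hTnn : ∀ i, 0 ≤ T i := by
    intro i
    rw [hTdef]
    by_cases hi : i < m
    · have h1 : q i ≤ a := hqle i
      have h2 : lamt i ≤ θ := hθge i hi
      have he : q i * lamt i - θ * q i + a * z i = (a - q i) * (θ - lamt i) := by
        rw [hzpos i hi]; ring
      rw [he]
      exact mul_nonneg (by linarith) (by linarith)
    · have h2 : θ ≤ lamt i := hθle i (by omega)
      have he : q i * lamt i - θ * q i + a * z i = q i * (lamt i - θ) := by
        rw [hzneg i hi]; ring
      rw [he]
      exact mul_nonneg (hqnn i) (by linarith)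
  have hTsumm : Summable T := by
    have : Summable (fun i => q i * lamt i - θ * q i + a * z i) :=
      Summable.add (Summable.sub hsum (hqs.mul_left θ)) (hzsum.mul_left a)
    exact this.congr (fun i => (hTdef i).symm)
  have hTtsum : ∑' i, T i = (∑' i, q i * lamt i) - θ
      + a * ((m:ℝ) * θ - (m:ℝ) * Real.logb 2 (m:ℝ)) := by
    rw [tsum_congr hTdef]
    rw [Summable.tsum_add (Summable.sub hsum (hqs.mul_left θ)) (hzsum.mul_left a),
      Summable.tsum_sub hsum (hqs.mul_left θ), tsum_mul_left, tsum_mul_left, htq, hztsum]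
    ring
  obtain ⟨B, hBdef⟩ : ∃ B : ℝ, B = θ * (1 - a * (m:ℝ)) + a * ((m:ℝ) * Real.logb 2 (m:ℝ)) :=
    ⟨_, rfl⟩
  obtain ⟨hch, hchiff⟩ := chord_le hm1 hcm1 hcm
  rw [← hθdef] at hch hchiff
  have he2 : a * ((m:ℝ) * Real.logb 2 (m:ℝ) + θ * (c - (m:ℝ))) = B := by
    rw [hBdef]
    linear_combination θ * hac
  have he1 : a * (c * Real.logb 2 c) = Real.logb 2 c := by
    rw [show a * (c * Real.logb 2 c) = (a*c) * Real.logb 2 c by ring, hac, one_mul]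
  have hBle : Real.logb 2 c ≤ B := by
    have h := mul_le_mul_of_nonneg_left hch ha0.le
    rw [he1, he2] at h
    exact h
  have hBlt : c ≠ (m:ℝ) → Real.logb 2 c < B := by
    intro hne
    have hstrict : c * Real.logb 2 c < (m:ℝ) * Real.logb 2 (m:ℝ) + θ * (c - (m:ℝ)) :=
      lt_of_le_of_ne hch (fun h => hne (hchiff.mp h))
    have h := mul_lt_mul_of_pos_left hstrict ha0
    rw [he1, he2] at h
    exact h
  have hLam : ∑' i, q i * lamt i = (∑' i, T i) + B := by
    rw [hTtsum, hBdef]; ring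
  have hT0 : 0 ≤ ∑' i, T i := tsum_nonneg hTnn
  have hLHS : -(Real.logb 2 (⨆ x, p x)) = Real.logb 2 c := by
    rw [← hsup, hcdef, Real.logb_inv]
  constructor
  · rw [hLHS, hLam]
    linarith
  constructor
  · -- equality → uniform
    intro heq
    rw [hLHS, hLam] at heq
    have hBeq : B = Real.logb 2 c := by
      by_contra hne
      have : Real.logb 2 c < B := lt_of_le_of_ne hBle (Ne.symm hne)
      linarith
    have hTz : ∑' i, T i = 0 := by linarith
    have hcmeq : c = (m:ℝ) := by
      by_contra hne
      have := hBlt hne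
      linarith
    have hainv : a = ((m:ℝ))⁻¹ := by
      have h1 : a * (m:ℝ) = 1 := by rw [← hcmeq]; exact hac
      have h2 : (m:ℝ) * a = 1 := by rw [mul_comm]; exact h1
      exact eq_inv_of_mul_eq_one_left h1
    have hTall : ∀ i, T i = 0 := by
      intro i
      refine le_antisymm ?_ (hTnn i)
      have := Summable.le_tsum hTsumm i (fun j _ => hTnn j)
      rw [hTz] at this
      exact this
    have hqlt : ∀ i, i < m - 1 → q i = a := by
      intro i hi
      have him : i < m := by omega
      have he : (a - q i) * (θ - lamt i) = 0 := by
        have h := hTall i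
        rw [hTdef, hzpos i him] at h
        linear_combination h
      have hlt : lamt i < θ := hθlt i hi
      rcases mul_eq_zero.mp he with h' | h'
      · linarith
      · linarith
    have hqz : ∀ i, m ≤ i → q i = 0 := by
      intro i hi
      have him : ¬ i < m := by omega
      have he : q i * (lamt i - θ) = 0 := by
        have h := hTall i
        rw [hTdef, hzneg i him] at h
        linear_combination h
      have hlt : θ < lamt i := hθgt i hi
      rcases mul_eq_zero.mp he with h' | h'
      · exact h'
      · linarith
    have hqm1 : q (m-1) = a := by
      have hsum_eq : ∑' i, q i = ∑ i ∈ Finset.range m, q i :=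
        tsum_eq_sum (fun i hi => hqz i (by simpa [Finset.mem_range] using hi))
      rw [htq] at hsum_eq
      have hm' : m = (m-1) + 1 := by omega
      rw [hm', Finset.sum_range_succ] at hsum_eq
      have hconst : ∀ i ∈ Finset.range (m-1), q i = a := by
        intro i hi
        exact hqlt i (by simpa [Finset.mem_range] using hi)
      rw [Finset.sum_congr rfl hconst, Finset.sum_const, Finset.card_range, nsmul_eq_mul] at hsum_eq
      have hcast : ((m-1 : ℕ):ℝ) = (m:ℝ) - 1 := by
        push_cast [Nat.cast_sub hm1]; ring
      rw [hcast, hainv] at hsum_eq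
      rw [hainv]
      have hmne : (m:ℝ) ≠ 0 := hm0R.ne'
      field_simp at hsum_eq ⊢
      linarith
    have hqall : ∀ i, q i = if i < m then a else 0 := by
      intro i
      by_cases hi : i < m
      · simp only [if_pos hi]
        rcases Nat.lt_or_ge i (m-1) with h' | h'
        · exact hqlt i h'
        · have : i = m - 1 := by omega
          rw [this]; exact hqm1
      · simp only [if_neg hi]
        exact hqz i (by omega)
    -- fiber argument
    obtain ⟨hfp, hfq, hcard⟩ := fiber_eq hpmf hq ha0
    have hfibq : {i : ℕ | q i = a} = Set.Iio m := by
      ext i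
      simp only [mem_setOf_eq, Set.mem_Iio]
      rw [hqall i]
      by_cases hi : i < m
      · simp [hi]
      · simp only [if_neg hi]
        constructor
        · intro h
          exact ((ne_of_gt ha0) h.symm).elim
        · intro h
          exact (hi h).elim
    have hcardq : {i : ℕ | q i = a}.ncard = m := by
      rw [hfibq, show Set.Iio m = ↑(Finset.range m) by simp, Set.ncard_coe_finset,
        Finset.card_range]
    have hcardp : {x | p x = a}.ncard = m := by rw [hcard, hcardq]
    set S : Finset X := hfp.toFinset with hSdef
    have hScard : S.card = m := by
      rw [hSdef, ← Set.ncard_eq_toFinset_card _ hfp, hcardp]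
    have hSmem : ∀ x, x ∈ S ↔ p x = a := fun x => Set.Finite.mem_toFinset hfp
    have hSsum : ∑ x ∈ S, p x = 1 := by
      have : ∀ x ∈ S, p x = a := fun x hx => (hSmem x).mp hx
      rw [Finset.sum_congr rfl this, Finset.sum_const, hScard, nsmul_eq_mul, hainv]
      field_simp
    have hsplit := Summable.tsum_add_tsum_compl (s := (↑S : Set X))
      (hpmf.2.summable.subtype _) (hpmf.2.summable.subtype _)
    rw [hpmf.2.tsum_eq] at hsplit
    have hfirst : ∑' (x : (↑S : Set X)), p x = 1 := by
      rw [show ∑' (x : (↑S : Set X)), p x = ∑' (x : {x // x ∈ S}), p x from rfl,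
        Finset.tsum_subtype S p, hSsum]
    have hcompl : ∑' (x : ((↑S : Set X)ᶜ : Set X)), p x = 0 := by
      rw [hfirst] at hsplit
      linarith
    have hout : ∀ x ∉ S, p x = 0 := by
      intro x hx
      have hxc : x ∈ ((↑S : Set X)ᶜ : Set X) := by
        simp only [Set.mem_compl_iff, Finset.coe_sort_coe, Finset.mem_coe]
        exact hx
      have hle := Summable.le_tsum (hpmf.2.summable.subtype ((↑S : Set X)ᶜ)) ⟨x, hxc⟩
        (fun j _ => hpmf.1 j.1)
      have hle2 : p x ≤ ∑' (y : ((↑S : Set X)ᶜ : Set X)), p ↑y := hle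
      rw [hcompl] at hle2
      exact le_antisymm hle2 (hpmf.1 x)
    refine ⟨S, ?_, ?_, hout⟩
    · rw [← Finset.card_pos, hScard]; omega
    · intro x hx
      rw [(hSmem x).mp hx, hScard, hainv]
  · -- uniform → equality
    rintro ⟨S, hSne, hmem, hout⟩
    have hqval := q_of_uniform hpmf hq hqnn hSne hmem hout
    have hn1 : 1 ≤ S.card := Finset.card_pos.mpr hSne
    have hn0R : (0:ℝ) < (S.card:ℝ) := by exact_mod_cast hn1
    have hΛ : ∑' i, q i * lamt i = Real.logb 2 (S.card:ℝ) := by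
      rw [tsum_eq_sum (s := Finset.range S.card) (fun i hi => by
        rw [hqval i]
        simp only [Finset.mem_range] at hi
        simp [hi])]
      have : ∀ i ∈ Finset.range S.card, q i * lamt i = ((S.card:ℝ))⁻¹ * lamt i := by
        intro i hi
        rw [hqval i]
        simp only [Finset.mem_range] at hi
        simp [hi]
      rw [Finset.sum_congr rfl this, ← Finset.mul_sum, sum_lamt]
      field_simp
    rw [hΛ, ← hsup, hadef]
    have hq0 : q 0 = ((S.card:ℝ))⁻¹ := by
      rw [hqval 0, if_pos (show 0 < S.card by omega)]
    rw [hq0, Real.logb_inv, neg_neg]
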